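/- Let V be a complex vector space and j ∈ End(V) with j∘j = −Id. Let D_j be the operator on trilinear maps R : V × V × V → V defined by (D_j R)(X,Y,Z) = j(R(X,Y,Z)) − R(jX,Y,Z) − R(X,jY,Z) − R(X,Y,jZ). Then D_j∘(D_j² + 4)∘(D_j² + 16) = 0, i.e. D_j⁵(R) + 20·D_j³(R) + 64·D_j(R) = 0 for every trilinear map R : V × V × V → V. (Equivalently, the only possible eigenvalues of D_j on curvature-type tensors are 0, ±2i and ±4i.) -/
import Mathlib


open LinearMap Module

/-- The derivation action `D_j` of `j` on `V`-valued trilinear maps: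
`(D_j R)(X,Y,Z) = j(R(X,Y,Z)) − R(jX,Y,Z) − R(X,jY,Z) − R(X,Y,jZ)`. -/
noncomputable def DjTri {V : Type*} [AddCommGroup V] [Module ℂ V]
    (j : Module.End ℂ V) (R : V →ₗ[ℂ] V →ₗ[ℂ] (V →ₗ[ℂ] V)) :
    V →ₗ[ℂ] V →ₗ[ℂ] (V →ₗ[ℂ] V) :=
  R.compr₂ (LinearMap.llcomp ℂ V V V j)
    - R.compl₁₂ j LinearMap.id - R.compl₁₂ LinearMap.id j
    - R.compr₂ (LinearMap.lcomp ℂ V j)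

lemma DjTri_apply {V : Type*} [AddCommGroup V] [Module ℂ V]
    (j : Module.End ℂ V) (R : V →ₗ[ℂ] V →ₗ[ℂ] (V →ₗ[ℂ] V)) (X Y Z : V) :
    DjTri j R X Y Z = j (R X Y Z) - R (j X) Y Z - R X (j Y) Z - R X Y (j Z) := by
  simp [DjTri]

/-- If `j² = −Id` then `D_j∘(D_j² + 4)∘(D_j² + 16) = 0` on `V`-valued trilinear maps: the
only possible eigenvalues of `D_j` on curvature-type tensors are `0`, `±2i` and `±4i`. -/
theorem DjTri_quintic {V : Type*} [AddCommGroup V] [Module ℂ V]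
    (j : Module.End ℂ V) (hj : j * j = -1) :
    ∀ R : V →ₗ[ℂ] V →ₗ[ℂ] (V →ₗ[ℂ] V),
      DjTri j (DjTri j (DjTri j (DjTri j (DjTri j R))))
        + (20 : ℂ) • DjTri j (DjTri j (DjTri j R))
        + (64 : ℂ) • DjTri j R = 0 := by
  have hj' : ∀ w : V, j (j w) = -w := by
    intro w
    have := congrArg (fun f : Module.End ℂ V => f w) hj
    simpa using this
  intro R
  ext X Y Z
  simp only [DjTri_apply, map_sub, map_neg, LinearMap.sub_apply, LinearMap.neg_apply,
    LinearMap.add_apply, LinearMap.smul_apply, LinearMap.zero_apply, hj']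
  module
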